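/- Define, for k ≥ 1, g_k(y_i,y,q) = q³·(q^{1+3k/2} χ_k(q^{-1/2}y)·(y₁+y₂+y₃) + q^{3k/2} χ_{k+2}(q^{-1/2}y) - q^{3(k+1)/2} χ_{k-1}(q^{-1/2}y) - q^{-1+3(k+1)/2} χ_{k+1}(q^{-1/2}y)·(y₁^{-1}+y₂^{-1}+y₃^{-1})) / ((1-y₁q)(1-y₂q)(1-y₃q)), together with g_{-1} = (qy + q²y^{-1} - q²∑y_i^{-1} + q³)/∏(1-y_iq) and g₀ = (q⁴∑y_i + q²(y² + q + q²y^{-2}) - q³(y + qy^{-1})∑y_i^{-1})/∏(1-y_iq). Then, as an identity of formal power series in u = q^{1/2} with coefficients that are Laurent polynomials in y₁,y₂,y₃,y divided by ∏(1-y_i u²) (the infinite sum converging u-adically since g_k has lowest order u^{2k+4}), one has ∑_{k=-1}^{∞} g_k(y_i,y,q) = (q⁴(y₁+y₂+y₃) - q²(y₁^{-1}+y₂^{-1}+y₃^{-1}) + (1-q³)(yq + y^{-1}q²)) / ((1-y₁q)(1-y₂q)(1-y₃q)(1-yq)(1-y^{-1}q²)). -/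

import Mathlib

/-! Put `S n = q^{3n/2} χ_n(q^{-1/2} y)`. Since `S n` is the complete homogeneous polynomial
`h_n(q²y⁻¹, qy)`, the sl(2) rule `χ₁ χ_{n+1} = χ_{n+2} + χ_n` makes
`(1 - qy)(1 - q²y⁻¹) ∑_{n<N} S n` telescope to `1` up to order `q^N`: this is the generating
function `∑ S n = 1/((1 - qy)(1 - q²y⁻¹))`. For `k ≥ 1`,
`∏(1 - yᵢq) g_k = q⁴∑yᵢ S_k - q²∑yᵢ⁻¹ S_{k+1} + S_{k+2} - q⁶ S_{k-1}`,
and `g₋₁`, `g₀` fit the same pattern, so every partial sum of the `g_k` is a combination of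
partial sums of `S` which agrees with `f_sugra` to an order growing with the number of terms. -/

open Finset

namespace SugraLargeN

/-- The field of fractions of polynomials in the fugacities `y₁, y₂, y₃, y`
(variables `0,1,2,3`). -/
abbrev K : Type := FractionRing (MvPolynomial (Fin 4) ℚ)

/-- The fugacities `y₁, y₂, y₃` (for `i = 0,1,2`) and `y` (for `i = 3`). -/
noncomputable def yv (i : Fin 4) : K :=
  algebraMap (MvPolynomial (Fin 4) ℚ) K (MvPolynomial.X i)

/-- We work in formal power series in `u = q^{1/2}`. -/
noncomputable abbrev u : PowerSeries K := PowerSeries.X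

noncomputable def Cc : K →+* PowerSeries K := PowerSeries.C

/-- `u^m · χ_j(u⁻¹ y)` where `χ_j(r) = ∑_{i=0}^{j} r^{j-2i}` is the sl(2) character of
highest weight `j`; for `m ≥ j` this is the polynomial `∑_i y^{j-2i} u^{m-j+2i}`. -/
noncomputable def chiTerm (m j : ℕ) : PowerSeries K :=
  ∑ i ∈ Finset.range (j + 1), Cc (yv 3 ^ ((j : ℤ) - 2 * i)) * u ^ (m - j + 2 * i)

/-- The common denominator `∏_{i=1}^{3} (1 - yᵢ q)`, with `q = u²`. -/
noncomputable def D : PowerSeries K :=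
  (1 - Cc (yv 0) * u ^ 2) * (1 - Cc (yv 1) * u ^ 2) * (1 - Cc (yv 2) * u ^ 2)

noncomputable def sumY : K := yv 0 + yv 1 + yv 2
noncomputable def sumYinv : K := (yv 0)⁻¹ + (yv 1)⁻¹ + (yv 2)⁻¹

/-- `g₋₁ = (qy + q²y⁻¹ - q²∑yᵢ⁻¹ + q³)/∏(1-yᵢq)` with `q = u²`. -/
noncomputable def gNegOne : PowerSeries K :=
  (Cc (yv 3) * u ^ 2 + Cc (yv 3)⁻¹ * u ^ 4 - Cc sumYinv * u ^ 4 + u ^ 6) * D⁻¹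

/-- `g₀ = (q⁴∑yᵢ + q²(y² + q + q²y⁻²) - q³(y + qy⁻¹)∑yᵢ⁻¹)/∏(1-yᵢq)` with `q = u²`. -/
noncomputable def gZero : PowerSeries K :=
  (Cc sumY * u ^ 8 + (Cc (yv 3 ^ 2) * u ^ 4 + u ^ 6 + Cc (yv 3 ^ (-2 : ℤ)) * u ^ 8)
      - (Cc (yv 3) * u ^ 6 + Cc (yv 3)⁻¹ * u ^ 8) * Cc sumYinv) * D⁻¹

/-- For `k ≥ 1`, the single-particle character
`g_k = q³(q^{1+3k/2}χ_k(q^{-1/2}y)·∑yᵢ + q^{3k/2}χ_{k+2}(q^{-1/2}y)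
  - q^{3(k+1)/2}χ_{k-1}(q^{-1/2}y) - q^{-1+3(k+1)/2}χ_{k+1}(q^{-1/2}y)·∑yᵢ⁻¹)/∏(1-yᵢq)`
with `q = u²`. -/
noncomputable def gk (k : ℕ) : PowerSeries K :=
  u ^ 6 * (chiTerm (3 * k + 2) k * Cc sumY + chiTerm (3 * k) (k + 2)
      - chiTerm (3 * k + 3) (k - 1) - chiTerm (3 * k + 1) (k + 1) * Cc sumYinv) * D⁻¹

/-- The family `(g_k)_{k ≥ -1}` reindexed over `ℕ` (index `n` corresponds to
`k = n - 1`). -/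
noncomputable def g : ℕ → PowerSeries K
  | 0 => gNegOne
  | 1 => gZero
  | (n + 2) => gk (n + 1)

/-- The formal sum `∑_{k=-1}^{∞} g_k`: since `g_k` has lowest order `u^{2k+4}`, its
coefficients are defined by a stable truncation. -/
noncomputable def gSum : PowerSeries K :=
  PowerSeries.mk fun j => ∑ n ∈ Finset.range (j + 1), PowerSeries.coeff j (g n)

/-- The single-particle supergravity index
`f_sugra = (q⁴∑yᵢ - q²∑yᵢ⁻¹ + (1-q³)(yq + y⁻¹q²))
  / (∏(1-yᵢq)·(1-yq)(1-y⁻¹q²))` with `q = u²`. -/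
noncomputable def fSugra : PowerSeries K :=
  (Cc sumY * u ^ 8 - Cc sumYinv * u ^ 4
      + (1 - u ^ 6) * (Cc (yv 3) * u ^ 2 + Cc (yv 3)⁻¹ * u ^ 4))
    * (D * (1 - Cc (yv 3) * u ^ 2) * (1 - Cc (yv 3)⁻¹ * u ^ 4))⁻¹


end SugraLargeN

theorem pow_dvd_pow_mul_of_dvd {M : Type*} [CommMonoid M] {x a : M} {n b k : ℕ}
    (ha : x ^ k ∣ a) (h : n ≤ b + k) : x ^ n ∣ x ^ b * a :=
  (pow_dvd_pow x h).trans (by rw [pow_add]; exact mul_dvd_mul_left _ ha)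

section CompleteHomogeneous

variable {R : Type*} [CommRing R]

def completeHomog (x y : R) (n : ℕ) : R := ∑ i ∈ range (n + 1), x ^ i * y ^ (n - i)

theorem completeHomog_zero (x y : R) : completeHomog x y 0 = 1 := by
  simp [completeHomog]

theorem completeHomog_succ (x y : R) (n : ℕ) :
    completeHomog x y (n + 1) = x ^ (n + 1) + y * completeHomog x y n := by
  simpa only [completeHomog, Nat.add_sub_cancel] using geom_sum₂_succ_eq x y (n := n + 1)

theorem completeHomog_one (x y : R) : completeHomog x y 1 = x + y := by
  rw [completeHomog_succ, completeHomog_zero]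
  ring

theorem completeHomog_two (x y : R) : completeHomog x y 2 = x ^ 2 + x * y + y ^ 2 := by
  rw [completeHomog_succ, completeHomog_one]
  ring

theorem add_mul_completeHomog_succ (x y : R) (n : ℕ) :
    (x + y) * completeHomog x y (n + 1)
      = completeHomog x y (n + 2) + x * y * completeHomog x y n := by
  rw [completeHomog_succ x y (n + 1), completeHomog_succ x y n]
  ring

theorem one_sub_mul_one_sub_mul_sum_completeHomog (x y : R) (N : ℕ) :
    (1 - x) * (1 - y) * ∑ n ∈ range (N + 1), completeHomog x y n
      = 1 - completeHomog x y (N + 1) + x * y * completeHomog x y N := by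
  induction N with
  | zero =>
    rw [zero_add, sum_range_one, completeHomog_one, completeHomog_zero]
    ring
  | succ N ih =>
    rw [sum_range_succ, mul_add, ih]
    linear_combination -add_mul_completeHomog_succ x y N

theorem pow_dvd_completeHomog {c x y : R} (hx : c ∣ x) (hy : c ∣ y) (n : ℕ) :
    c ^ n ∣ completeHomog x y n := by
  refine dvd_sum fun i hi => ?_
  rw [← Nat.add_sub_of_le (Nat.lt_succ_iff.mp (mem_range.mp hi)), pow_add,
    Nat.add_sub_cancel_left]
  exact mul_dvd_mul (pow_dvd_pow_of_dvd hx i) (pow_dvd_pow_of_dvd hy _)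

theorem pow_dvd_one_sub_mul_one_sub_mul_sum_completeHomog_sub_one {c x y : R} (hx : c ∣ x)
    (hy : c ∣ y) (N : ℕ) :
    c ^ N ∣ (1 - x) * (1 - y) * ∑ n ∈ range N, completeHomog x y n - 1 := by
  cases N with
  | zero => simp
  | succ N =>
    rw [one_sub_mul_one_sub_mul_sum_completeHomog, add_sub_right_comm, sub_sub_cancel_left]
    refine dvd_add (dvd_neg.mpr (pow_dvd_completeHomog hx hy _)) ?_
    rw [pow_succ']
    exact mul_dvd_mul (dvd_mul_of_dvd_left hx y) (pow_dvd_completeHomog hx hy N)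

end CompleteHomogeneous

theorem PowerSeries.mk_sum_coeff_eq_of_X_pow_dvd {R : Type*} [CommRing R]
    {F : ℕ → PowerSeries R} {f : PowerSeries R} (hF : ∀ n, X ^ n ∣ F n)
    (hf : ∀ N, ∃ M ≥ N, X ^ N ∣ f - ∑ n ∈ range M, F n) :
    mk (fun j => ∑ n ∈ range (j + 1), coeff j (F n)) = f := by
  ext j
  obtain ⟨M, hM, hdvd⟩ := hf (j + 1)
  have hpartial : coeff j f = coeff j (∑ n ∈ range M, F n) :=
    sub_eq_zero.mp (by simpa using X_pow_dvd_iff.mp hdvd j (Nat.lt_succ_self j))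
  rw [hpartial, coeff_mk, map_sum]
  refine sum_subset (range_subset_range.mpr hM) fun n hnM hnj => ?_
  exact X_pow_dvd_iff.mp (hF n) j (by simpa using hnj)

namespace SugraLargeN

theorem yv_three_ne_zero : yv 3 ≠ 0 :=
  (map_ne_zero_iff _ (IsFractionRing.injective (MvPolynomial (Fin 4) ℚ) K)).mpr
    (MvPolynomial.X_ne_zero 3)

noncomputable def yq : PowerSeries K := Cc (yv 3) * u ^ 2

noncomputable def yInvQsq : PowerSeries K := Cc (yv 3)⁻¹ * u ^ 4

theorem Cc_y_mul_Cc_y_inv : Cc (yv 3) * Cc (yv 3)⁻¹ = 1 := by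
  rw [← map_mul, mul_inv_cancel₀ yv_three_ne_zero, map_one]

theorem yq_mul_yInvQsq : yq * yInvQsq = u ^ 6 := by
  rw [yq, yInvQsq, mul_mul_mul_comm, Cc_y_mul_Cc_y_inv, one_mul, ← pow_add]

/-- `S n = q^{3n/2} χ_n(q^{-1/2} y)`, the complete homogeneous polynomial `h_n(q²y⁻¹, qy)`. -/
noncomputable def S (n : ℕ) : PowerSeries K := completeHomog yInvQsq yq n

theorem X_sq_dvd_yq : u ^ 2 ∣ yq := dvd_mul_left _ _

theorem X_sq_dvd_yInvQsq : u ^ 2 ∣ yInvQsq :=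
  dvd_mul_of_dvd_right (pow_dvd_pow _ (by norm_num)) _

theorem X_pow_dvd_S (n : ℕ) : u ^ (2 * n) ∣ S n := by
  rw [pow_mul]
  exact pow_dvd_completeHomog X_sq_dvd_yInvQsq X_sq_dvd_yq n

theorem X_pow_mul_chiTerm {m j e c : ℕ} (hj : j ≤ m) (h : m + e = 3 * j + c) :
    u ^ e * chiTerm m j = u ^ c * S j := by
  rw [chiTerm, S, completeHomog, mul_sum, mul_sum]
  refine sum_congr rfl fun i hi => ?_
  have hi : i ≤ j := Nat.lt_succ_iff.mp (mem_range.mp hi)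
  have hy : yv 3 ^ ((j : ℤ) - 2 * i) = (yv 3)⁻¹ ^ i * yv 3 ^ (j - i) := by
    rw [inv_pow, ← zpow_natCast, ← zpow_natCast, ← zpow_neg, ← zpow_add₀ yv_three_ne_zero]
    push_cast [hi]
    ring_nf
  have hu : u ^ e * u ^ (m - j + 2 * i) = u ^ c * u ^ (4 * i) * u ^ (2 * (j - i)) := by
    rw [← pow_add, ← pow_add, ← pow_add]
    congr 1
    omega
  rw [hy, map_mul, map_pow, map_pow, yInvQsq, yq, mul_pow, mul_pow, ← pow_mul, ← pow_mul]
  linear_combination Cc (yv 3)⁻¹ ^ i * Cc (yv 3) ^ (j - i) * hu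

theorem constantCoeff_D_ne_zero : PowerSeries.constantCoeff D ≠ 0 := by
  simp [D, Cc]

theorem D_mul_mul_inv (x : PowerSeries K) : D * (x * D⁻¹) = x := by
  rw [mul_left_comm, PowerSeries.mul_inv_cancel D constantCoeff_D_ne_zero, mul_one]

theorem dvd_of_dvd_D_mul {p x : PowerSeries K} (h : p ∣ D * x) : p ∣ x := by
  simpa only [← mul_assoc, PowerSeries.inv_mul_cancel D constantCoeff_D_ne_zero, one_mul]
    using h.mul_left D⁻¹

theorem D_mul_g_zero : D * g 0 = S 1 - Cc sumYinv * u ^ 4 + u ^ 6 := by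
  rw [S, completeHomog_one, g, gNegOne, D_mul_mul_inv, yInvQsq, yq]
  ring

theorem D_mul_g_one : D * g 1 = Cc sumY * u ^ 8 - Cc sumYinv * u ^ 4 * S 1 + S 2 := by
  rw [S, S, completeHomog_one, completeHomog_two, g, gZero, D_mul_mul_inv, yq, yInvQsq, zpow_neg,
    zpow_ofNat, ← inv_pow, map_pow, map_pow]
  linear_combination -u ^ 6 * Cc_y_mul_Cc_y_inv

theorem D_mul_g_add_two (n : ℕ) :
    D * g (n + 2) = Cc sumY * (u ^ 8 * S (n + 1)) - Cc sumYinv * (u ^ 4 * S (n + 2))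
      + S (n + 3) - u ^ 12 * S n := by
  rw [g, gk, D_mul_mul_inv, Nat.add_sub_cancel, mul_sub, mul_sub, mul_add,
    ← mul_assoc, ← mul_assoc, X_pow_mul_chiTerm (c := 8) (by omega) (by omega),
    X_pow_mul_chiTerm (c := 0) (by omega) (by omega),
    X_pow_mul_chiTerm (c := 12) (by omega) (by omega),
    X_pow_mul_chiTerm (c := 4) (by omega) (by omega)]
  ring

theorem X_pow_dvd_g : ∀ n, u ^ n ∣ g n
  | 0 => by simp
  | 1 => by
    refine dvd_of_dvd_D_mul ?_
    rw [D_mul_g_one, pow_one, PowerSeries.X_dvd_iff]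
    simp [S, completeHomog_one, completeHomog_two, yq, yInvQsq]
  | n + 2 => by
    refine dvd_of_dvd_D_mul ?_
    rw [D_mul_g_add_two]
    refine dvd_sub (dvd_add (dvd_sub ?_ ?_) ?_)
      (pow_dvd_pow_mul_of_dvd (X_pow_dvd_S _) (by omega))
    · exact (pow_dvd_pow_mul_of_dvd (X_pow_dvd_S _) (by omega)).mul_left _
    · exact (pow_dvd_pow_mul_of_dvd (X_pow_dvd_S _) (by omega)).mul_left _
    · exact (pow_dvd_pow u (by omega)).trans (X_pow_dvd_S (n + 3))

theorem D_mul_sum_g (N : ℕ) :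
    D * ∑ n ∈ range (N + 2), g n
      = Cc sumY * (u ^ 8 * ∑ n ∈ range (N + 1), S n)
        - Cc sumYinv * (u ^ 4 * ∑ n ∈ range (N + 2), S n)
        + (∑ n ∈ range (N + 3), S n) - 1 + u ^ 6 - u ^ 12 * ∑ n ∈ range N, S n := by
  induction N with
  | zero =>
    simp only [sum_range_succ, sum_range_zero, mul_add, D_mul_g_zero, D_mul_g_one, S,
      completeHomog_zero]
    ring
  | succ N ih =>
    rw [sum_range_succ, mul_add, ih, D_mul_g_add_two, sum_range_succ S (N + 3),
      sum_range_succ S (N + 2), sum_range_succ S (N + 1), sum_range_succ S N]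
    ring

theorem X_pow_dvd_fSugra_sub_sum_g (N : ℕ) : u ^ N ∣ fSugra - ∑ n ∈ range (N + 2), g n := by
  set P := D * (1 - yq) * (1 - yInvQsq)
  set rem := fun M => (1 - yInvQsq) * (1 - yq) * ∑ n ∈ range M, S n - 1
  have hP : P * P⁻¹ = 1 := PowerSeries.mul_inv_cancel P (by simp [P, D, yq, yInvQsq, Cc])
  have hf : fSugra
      = (Cc sumY * u ^ 8 - Cc sumYinv * u ^ 4 + (1 - u ^ 6) * (yq + yInvQsq)) * P⁻¹ := rfl
  have key : fSugra - ∑ n ∈ range (N + 2), g n = -P⁻¹ * (Cc sumY * (u ^ 8 * rem (N + 1))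
      - Cc sumYinv * (u ^ 4 * rem (N + 2)) + rem (N + 3) - u ^ 12 * rem N) := by
    rw [hf]
    linear_combination (∑ n ∈ range (N + 2), g n) * hP
      - P⁻¹ * (1 - yq) * (1 - yInvQsq) * D_mul_sum_g N + P⁻¹ * (1 - u ^ 6) * yq_mul_yInvQsq
  have hrem (M : ℕ) : u ^ (2 * M) ∣ rem M := by
    rw [pow_mul]
    exact pow_dvd_one_sub_mul_one_sub_mul_sum_completeHomog_sub_one
      X_sq_dvd_yInvQsq X_sq_dvd_yq M
  rw [key]
  refine Dvd.dvd.mul_left (dvd_sub (dvd_add (dvd_sub ?_ ?_) ?_)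
    (pow_dvd_pow_mul_of_dvd (hrem _) (by omega))) _
  · exact (pow_dvd_pow_mul_of_dvd (hrem _) (by omega)).mul_left _
  · exact (pow_dvd_pow_mul_of_dvd (hrem _) (by omega)).mul_left _
  · exact (pow_dvd_pow u (by omega)).trans (hrem (N + 3))

/-- Holographic matching: `∑_{k=-1}^{∞} g_k = f_sugra` as formal power series in
`u = q^{1/2}`. -/
theorem sum_gk_eq_sugra_index : gSum = fSugra :=
  PowerSeries.mk_sum_coeff_eq_of_X_pow_dvd X_pow_dvd_g fun N =>
    ⟨N + 2, by omega, X_pow_dvd_fSugra_sub_sum_g N⟩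

end SugraLargeN
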